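/- (Gluing two crosses.) Let x, y ∈ B\{0} with x ∼ y, λ = (b_1,...,b_{deg x}) ∈ Λ_x, ν = (g_1,...,g_{deg y}) ∈ Λ_y, and let (λ,ν,i,j,l,k) and (λ,ν,i',j',l',k') be crosses (i.e., i<j, l<k, x(λ,i)∼y(ν,k), x(λ,j)∼y(ν,l), and similarly for the primed data) with j ≤ i' and k ≤ l'. Then there exist λ' ∈ Λ_x, ν' ∈ Λ_y (explicit permutations of λ and ν) such that (λ',ν', i'−j, j'−i, l'−k, k'−l) is a cross of height (j−i+j'−i', k−l+k'−l'). -/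

import Mathlib

open scoped Classical

def eVec (d α : ℕ) (i : Fin d) : Fin d → ℕ := fun j => if j = i then α else 0

def genSet (d α c : ℕ) (a : Fin c → Fin d → ℕ) : Set (Fin d → ℕ) :=
  Set.range (eVec d α) ∪ Set.range a

def Bmon (d α c : ℕ) (a : Fin c → Fin d → ℕ) : AddSubmonoid (Fin d → ℕ) :=
  AddSubmonoid.closure (genSet d α c a)

def Amon (d α : ℕ) : AddSubmonoid (Fin d → ℕ) :=
  AddSubmonoid.closure (Set.range (eVec d α))

def BAset (d α c : ℕ) (a : Fin c → Fin d → ℕ) : Set (Fin d → ℕ) :=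
  {x | x ∈ Bmon d α c a ∧ ∀ y ∈ Amon d α, y ≠ 0 → ∀ z ∈ Bmon d α c a, z + y ≠ x}

def equivA (α : ℕ) {d : ℕ} (x y : Fin d → ℕ) : Prop :=
  ∀ i, (α : ℤ) ∣ (x i : ℤ) - (y i : ℤ)

def degv (α : ℕ) {d : ℕ} (x : Fin d → ℕ) : ℕ := (∑ i, x i) / α

def pval {d : ℕ} (x : Fin d → ℕ) (L : List (Fin d → ℕ)) (i : ℕ) : Fin d → ℕ :=
  x - (L.take i).sum

def starSeq (d α c : ℕ) (a : Fin c → Fin d → ℕ) (x : Fin d → ℕ)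
    (L : List (Fin d → ℕ)) : Prop :=
  (∀ b ∈ L, b ∈ genSet d α c a) ∧
  ∀ i ≤ L.length, ∃ y ∈ Bmon d α c a, y + (L.take i).sum = x

def Lam (d α c : ℕ) (a : Fin c → Fin d → ℕ) (x : Fin d → ℕ) :
    Set (List (Fin d → ℕ)) :=
  {L | starSeq d α c a x L ∧ L.length = degv α x}

noncomputable def DeltaF (α : ℕ) {d : ℕ} (x y : Fin d → ℕ)
    (L M : List (Fin d → ℕ)) : Finset (ℕ × ℕ) :=
  (Finset.range (L.length + 1) ×ˢ Finset.range (M.length + 1)).filter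
    (fun p => equivA α (pval x L p.1) (pval y M p.2))

def hmin {d : ℕ} (x y : Fin d → ℕ) : Fin d → ℕ := fun i => min (x i) (y i)

def crossless (α : ℕ) {d : ℕ} (x y : Fin d → ℕ) (L M : List (Fin d → ℕ)) : Prop :=
  ∀ p ∈ DeltaF α x y L M, ∀ q ∈ DeltaF α x y L M, p ≤ q ∨ q ≤ p

def isCross (α : ℕ) {d : ℕ} (x y : Fin d → ℕ) (L M : List (Fin d → ℕ))
    (i j l k : ℕ) : Prop :=
  i < j ∧ j ≤ L.length ∧ l < k ∧ k ≤ M.length ∧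
  equivA α (pval x L i) (pval y M k) ∧ equivA α (pval x L j) (pval y M l)

noncomputable def deltaMin (d α c : ℕ) (a : Fin c → Fin d → ℕ)
    (x y : Fin d → ℕ) : ℕ :=
  sInf {n | ∃ L ∈ Lam d α c a x, ∃ M ∈ Lam d α c a y,
    n + 2 = (DeltaF α x y L M).card}

def eqvSetoid (α : ℕ) {d : ℕ} (S : Set (Fin d → ℕ)) : Setoid S where
  r x y := equivA α x.1 y.1
  iseqv := by
    refine ⟨fun x i => ?_, fun {x y} h i => ?_, fun {x y z} h1 h2 i => ?_⟩
    · simp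
    · exact dvd_sub_comm.mp (h i)
    · have := dvd_add (h1 i) (h2 i)
      simpa [sub_add_sub_cancel] using this

noncomputable def numClasses (d α c : ℕ) (a : Fin c → Fin d → ℕ) : ℕ :=
  Nat.card (Quotient (eqvSetoid α (BAset d α c a)))

lemma gen_sum {d α c : ℕ} {a : Fin c → Fin d → ℕ} (ha : ∀ i, ∑ j, a i j = α)
    {b : Fin d → ℕ} (hb : b ∈ genSet d α c a) : ∑ j, b j = α := by
  rcases hb with ⟨i, rfl⟩ | ⟨i, rfl⟩
  · simp [eVec]
  · exact ha i

lemma bmon_sum {d α c : ℕ} {a : Fin c → Fin d → ℕ} (ha : ∀ i, ∑ j, a i j = α)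
    {w : Fin d → ℕ} (hw : w ∈ Bmon d α c a) : ∃ n, ∑ j, w j = α * n := by
  induction hw using AddSubmonoid.closure_induction with
  | mem b hb => exact ⟨1, by simp [gen_sum ha hb]⟩
  | zero => exact ⟨0, by simp⟩
  | add u v hu hv ihu ihv =>
      obtain ⟨n, hn⟩ := ihu; obtain ⟨m, hm⟩ := ihv
      exact ⟨n + m, by simp [Finset.sum_add_distrib, hn, hm, Pi.add_apply, mul_add]⟩

lemma list_sum_coords {d α c : ℕ} {a : Fin c → Fin d → ℕ} (ha : ∀ i, ∑ j, a i j = α)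
    {L : List (Fin d → ℕ)} (hL : ∀ b ∈ L, b ∈ genSet d α c a) :
    ∑ j, L.sum j = α * L.length := by
  induction L with
  | nil => simp
  | cons b t ih =>
      simp only [List.sum_cons, Pi.add_apply, Finset.sum_add_distrib,
        gen_sum ha (hL b (by simp)), ih (fun u hu => hL u (by simp [hu])),
        List.length_cons]
      ring
lemma lam_sum {d α c : ℕ} {a : Fin c → Fin d → ℕ} (hα : 0 < α)
    (ha : ∀ i, ∑ j, a i j = α) {x : Fin d → ℕ} (hx : x ∈ Bmon d α c a)
    {L : List (Fin d → ℕ)} (hL : L ∈ Lam d α c a x) : L.sum = x := by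
  obtain ⟨⟨hmem, hstar⟩, hlen⟩ := hL
  obtain ⟨z, hz, hzx⟩ := hstar L.length le_rfl
  rw [List.take_length] at hzx
  obtain ⟨n, hn⟩ := bmon_sum ha hx
  have hdeg : degv α x = n := by
    simp [degv, hn, Nat.mul_div_cancel_left _ hα]
  have hcoords : ∑ j, z j + ∑ j, L.sum j = ∑ j, x j := by
    rw [← Finset.sum_add_distrib]
    exact Finset.sum_congr rfl fun j _ => congrFun hzx j
  rw [list_sum_coords ha hmem, hlen, hdeg, hn] at hcoords
  have hz0 : ∑ j, z j = 0 := by omega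
  have : z = 0 := by
    funext m
    have : z m ≤ ∑ j, z j := Finset.single_le_sum (fun i _ => Nat.zero_le _) (Finset.mem_univ m)
    simp only [Pi.zero_apply]
    omega
  rw [this] at hzx; simpa using hzx

lemma perm_lam {d α c : ℕ} {a : Fin c → Fin d → ℕ} (hα : 0 < α)
    (ha : ∀ i, ∑ j, a i j = α) {x : Fin d → ℕ} (hx : x ∈ Bmon d α c a)
    {L L' : List (Fin d → ℕ)} (hL : L ∈ Lam d α c a x) (hp : L.Perm L') :
    L' ∈ Lam d α c a x := by
  have hsum : L'.sum = x := (hp.sum_eq).symm.trans (lam_sum hα ha hx hL)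
  obtain ⟨⟨hmem, _⟩, hlen⟩ := hL
  refine ⟨⟨fun b hb => hmem b (hp.mem_iff.mpr hb), fun t ht => ?_⟩, hp.length_eq ▸ hlen⟩
  refine ⟨(L'.drop t).sum, ?_, ?_⟩
  · exact list_sum_mem fun b hb =>
      AddSubmonoid.subset_closure (hmem b (hp.mem_iff.mpr (List.mem_of_mem_drop hb)))
  · rw [add_comm, ← List.sum_append, List.take_append_drop, hsum]

lemma prefix_le {d : ℕ} {L : List (Fin d → ℕ)} {x : Fin d → ℕ}
    (hsum : L.sum = x) (t : ℕ) (m : Fin d) : (L.take t).sum m ≤ x m := by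
  have : (L.take t).sum + (L.drop t).sum = x := by
    rw [← List.sum_append, List.take_append_drop, hsum]
  have := congrFun this m
  simp only [Pi.add_apply] at this
  omega

lemma pval_cast {d : ℕ} {L : List (Fin d → ℕ)} {x : Fin d → ℕ}
    (hsum : L.sum = x) (t : ℕ) (m : Fin d) :
    (pval x L t m : ℤ) = (x m : ℤ) - ((L.take t).sum m : ℤ) := by
  have := prefix_le hsum t m
  simp only [pval, Pi.sub_apply]
  omega
lemma take_split {β : Type*} (L : List β) {u v : ℕ} (huv : u ≤ v) :
    L.take v = L.take u ++ (L.drop u).take (v - u) := by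
  conv_lhs => rw [show v = u + (v - u) from by omega]
  exact List.take_add

lemma block_sum {d : ℕ} (L : List (Fin d → ℕ)) {u v : ℕ} (huv : u ≤ v) (m : Fin d) :
    ((((L.drop u).take (v - u)).sum) m : ℤ) =
      ((L.take v).sum m : ℤ) - ((L.take u).sum m : ℤ) := by
  have h := congrFun (congrArg List.sum (take_split L huv)) m
  rw [List.sum_append] at h
  simp only [Pi.add_apply] at h
  rw [h]; push_cast; ring

lemma decomp {β : Type*} (L : List β) {i j i' j' : ℕ}
    (h1 : i ≤ j) (h2 : j ≤ i') (h3 : i' ≤ j') :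
    L = ((L.take i ++ (L.drop i).take (j - i)) ++ (L.drop j).take (i' - j) ++
        (L.drop i').take (j' - i')) ++ L.drop j' := by
  conv_lhs => rw [← List.take_append_drop j' L,
    take_split L h3, take_split L h2, take_split L h1]

lemma decomp_perm {β : Type*} (L : List β) {i j i' j' : ℕ}
    (h1 : i ≤ j) (h2 : j ≤ i') (h3 : i' ≤ j') :
    L.Perm (((L.drop j).take (i' - j) ++ (L.drop i).take (j - i) ++
      (L.drop i').take (j' - i')) ++ (L.take i ++ L.drop j')) := by
  rw [← Multiset.coe_eq_coe]
  conv_lhs => rw [decomp L h1 h2 h3]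
  simp only [← Multiset.coe_add]
  abel

/-- gluing two crosses: given crosses `(λ,ν,i,j,l,k)` and
`(λ,ν,i',j',l',k')` with `j ≤ i'` and `k ≤ l'`, there are permuted sequences
`λ' ∈ Λ_x`, `ν' ∈ Λ_y` giving a cross `(λ',ν', i'−j, j'−i, l'−k, k'−l)` of height
`(j−i+j'−i', k−l+k'−l')`. -/
theorem glue_crosses (d α c : ℕ) (hd : 0 < d) (hα : 0 < α) (hc : 0 < c)
    (a : Fin c → Fin d → ℕ) (ha : ∀ i, ∑ j, a i j = α)
    (x y : Fin d → ℕ) (hx : x ∈ Bmon d α c a) (hx0 : x ≠ 0)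
    (hy : y ∈ Bmon d α c a) (hy0 : y ≠ 0) (hxy : equivA α x y)
    (L : List (Fin d → ℕ)) (hL : L ∈ Lam d α c a x)
    (M : List (Fin d → ℕ)) (hM : M ∈ Lam d α c a y)
    (i j l k i' j' l' k' : ℕ)
    (hc1 : isCross α x y L M i j l k) (hc2 : isCross α x y L M i' j' l' k')
    (hji : j ≤ i') (hkl : k ≤ l') :
    ∃ L' ∈ Lam d α c a x, ∃ M' ∈ Lam d α c a y,
      L.Perm L' ∧ M.Perm M' ∧
      isCross α x y L' M' (i' - j) (j' - i) (l' - k) (k' - l) ∧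
      (j' - i) - (i' - j) = (j - i) + (j' - i') ∧
      (k' - l) - (l' - k) = (k - l) + (k' - l') := by
  obtain ⟨hij, hjL, hlk, hkM, e1, e2⟩ := hc1
  obtain ⟨hij', hjL', hlk', hkM', e3, e4⟩ := hc2
  have hLs : L.sum = x := lam_sum hα ha hx hL
  have hMs : M.sum = y := lam_sum hα ha hy hM
  set B1 := (L.drop j).take (i' - j) with hB1
  set B2 := (L.drop i).take (j - i) with hB2
  set B3 := (L.drop i').take (j' - i') with hB3
  set C1 := (M.drop k).take (l' - k) with hC1
  set C2 := (M.drop l).take (k - l) with hC2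
  set C3 := (M.drop l').take (k' - l') with hC3
  set L' := (B1 ++ B2 ++ B3) ++ (L.take i ++ L.drop j') with hLdef
  set M' := (C1 ++ C2 ++ C3) ++ (M.take l ++ M.drop k') with hMdef
  have hpL : L.Perm L' := decomp_perm L hij.le hji hij'.le
  have hpM : M.Perm M' := decomp_perm M hlk.le hkl hlk'.le
  have hL' : L' ∈ Lam d α c a x := perm_lam hα ha hx hL hpL
  have hM' : M' ∈ Lam d α c a y := perm_lam hα ha hy hM hpM
  have hL's : L'.sum = x := lam_sum hα ha hx hL'
  have hM's : M'.sum = y := lam_sum hα ha hy hM'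
  have hlenB1 : B1.length = i' - j := by
    simp [hB1, List.length_take, List.length_drop]; omega
  have hlenB123 : (B1 ++ B2 ++ B3).length = j' - i := by
    simp [hB1, hB2, hB3, List.length_take, List.length_drop]; omega
  have hlenC1 : C1.length = l' - k := by
    simp [hC1, List.length_take, List.length_drop]; omega
  have hlenC123 : (C1 ++ C2 ++ C3).length = k' - l := by
    simp [hC1, hC2, hC3, List.length_take, List.length_drop]; omega
  have hT1 : L'.take (i' - j) = B1 := by
    rw [hLdef, List.append_assoc, List.append_assoc]
    exact List.take_left' hlenB1
  have hT2 : L'.take (j' - i) = B1 ++ B2 ++ B3 := List.take_left' hlenB123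
  have hU1 : M'.take (l' - k) = C1 := by
    rw [hMdef, List.append_assoc, List.append_assoc]
    exact List.take_left' hlenC1
  have hU2 : M'.take (k' - l) = C1 ++ C2 ++ C3 := List.take_left' hlenC123
  refine ⟨L', hL', M', hM', hpL, hpM,
    ⟨by omega, ?_, by omega, ?_, ?_, ?_⟩, by omega, by omega⟩
  · rw [← hpL.length_eq]; omega
  · rw [← hpM.length_eq]; omega
  · -- equivA α (pval x L' (i'-j)) (pval y M' (k'-l))
    intro m
    have key : (pval x L' (i' - j) m : ℤ) - (pval y M' (k' - l) m : ℤ) =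
        ((pval x L i' m : ℤ) - (pval y M k' m : ℤ)) -
        ((pval x L j m : ℤ) - (pval y M l m : ℤ)) + ((x m : ℤ) - (y m : ℤ)) := by
      rw [pval_cast hL's, pval_cast hM's, hT1, hU2,
        pval_cast hLs, pval_cast hLs, pval_cast hMs, pval_cast hMs]
      have b1 := block_sum L hji m
      have hsum3 : ∀ (l₁ l₂ : List (Fin d → ℕ)), ((l₁ ++ l₂).sum) m = l₁.sum m + l₂.sum m :=
        fun l₁ l₂ => by rw [List.sum_append]; rfl
      rw [hsum3, hsum3]
      push_cast
      rw [block_sum M hkl m, block_sum M hlk.le m, block_sum M hlk'.le m, b1]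
      ring
    rw [key]
    exact dvd_add (dvd_sub (e3 m) (e2 m)) (hxy m)
  · -- equivA α (pval x L' (j'-i)) (pval y M' (l'-k))
    intro m
    have key : (pval x L' (j' - i) m : ℤ) - (pval y M' (l' - k) m : ℤ) =
        ((pval x L j' m : ℤ) - (pval y M l' m : ℤ)) -
        ((pval x L i m : ℤ) - (pval y M k m : ℤ)) + ((x m : ℤ) - (y m : ℤ)) := by
      rw [pval_cast hL's, pval_cast hM's, hT2, hU1,
        pval_cast hLs, pval_cast hLs, pval_cast hMs, pval_cast hMs]
      have hsum3 : ∀ (l₁ l₂ : List (Fin d → ℕ)), ((l₁ ++ l₂).sum) m = l₁.sum m + l₂.sum m :=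
        fun l₁ l₂ => by rw [List.sum_append]; rfl
      rw [hsum3, hsum3]
      push_cast
      rw [block_sum L hji m, block_sum L hij.le m, block_sum L hij'.le m,
        block_sum M hkl m]
      ring
    rw [key]
    exact dvd_add (dvd_sub (e4 m) (e1 m)) (hxy m)
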